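/- Let n ≥ 2, let c be a coloring of n strands and set t = t_{c_n}. Suppose A is an (n−1)×(n−1) matrix over Λ_μ and v is a row vector of length n−1 over Λ_μ such that (A, v) satisfies the boundary relation for c. Let M = [[A,0],[v,1]] and let G' be the n×n matrix equal to the identity except in its last 2×2 diagonal block, which equals [[1, 1],[0, −t^{−1}]] (G' is the reduced colored Gassner matrix of the stabilizing generator σ_n^{−1} for the coloring (c_1,…,c_n,c_n) of n+1 strands; it is the inverse of the block [[1,t],[0,−t]]). Then (T^c_n − 1) · det(M·G' − I_n) = t^{−1}·(1 − T^c_{n−1}·t²) · det(A − I_{n−1}). (This is the determinant identity establishing invariance of the paper's invariant f under the negative second colored Markov move.) -/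

import Mathlib

noncomputable section

open scoped BigOperators

/-- The multivariable Laurent polynomial ring `Λ_μ = ℤ[t₁^{±1},…,t_μ^{±1}]`,
realized as the group ℤ-algebra of `ℤ^μ`. -/
abbrev Lau (μ : ℕ) : Type := AddMonoidAlgebra ℤ (Fin μ →₀ ℤ)

instance (μ : ℕ) : IsDomain (Lau μ) := NoZeroDivisors.to_isDomain _

/-- The distinguished unit `t_i` of `Λ_μ`. -/
def tU {μ : ℕ} (i : Fin μ) : (Lau μ)ˣ where
  val := AddMonoidAlgebra.single (Finsupp.single i 1) 1
  inv := AddMonoidAlgebra.single (Finsupp.single i (-1)) 1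
  val_inv := by
    rw [AddMonoidAlgebra.single_mul_single, ← Finsupp.single_add]
    norm_num; rfl
  inv_val := by
    rw [AddMonoidAlgebra.single_mul_single, ← Finsupp.single_add]
    norm_num; rfl

/-- `T^c_i = t_{c_1} ⋯ t_{c_i}` (product of the first `i` values of the coloring,
zero-indexed: product over indices `k ≤ i`), as a unit of `Λ_μ`. -/
def TU {μ n : ℕ} (c : Fin n → Fin μ) (i : Fin n) : (Lau μ)ˣ :=
  ∏ k ∈ Finset.Iic i, tU (c k)

/-- The `n×n` matrix `[[A,0],[v,1]]` built from an `(n−1)×(n−1)` matrix `A`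
and a row vector `v` of length `n−1` (here `n = l+2`): the upper-left block is `A`,
the last column is `(0,…,0,1)ᵀ` and the last row begins with `v`. -/
def aug {μ l : ℕ} (A : Matrix (Fin (l+1)) (Fin (l+1)) (Lau μ)) (v : Fin (l+1) → Lau μ) :
    Matrix (Fin (l+2)) (Fin (l+2)) (Lau μ) := fun i j =>
  if hi : (i : ℕ) < l + 1 then
    if hj : (j : ℕ) < l + 1 then A ⟨i, hi⟩ ⟨j, hj⟩ else 0
  else
    if hj : (j : ℕ) < l + 1 then v ⟨j, hj⟩ else 1

/-- The pair `(A, v)` satisfies the boundary relation for the coloring `c`: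
for every column `j`, `∑_{i=1}^{n−1} (T^c_i − 1)(A − I)_{ij} = −(T^c_n − 1) v_j`. -/
def BoundaryRel {μ l : ℕ} (c : Fin (l+2) → Fin μ) (A : Matrix (Fin (l+1)) (Fin (l+1)) (Lau μ))
    (v : Fin (l+1) → Lau μ) : Prop :=
  ∀ j : Fin (l+1), ∑ i : Fin (l+1),
      ((TU c i.castSucc : Lau μ) - 1) * (A - 1) i j
    = -((TU c (Fin.last (l+1)) : Lau μ) - 1) * v j

/-- The `(l+2)×(l+2)` matrix equal to the identity except in its last `2×2`
diagonal block, which is `[[a,b],[c,d]]`. -/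
def last2Block {μ : ℕ} (l : ℕ) (a b c d : Lau μ) :
    Matrix (Fin (l+2)) (Fin (l+2)) (Lau μ) := fun i j =>
  if (i : ℕ) = l ∧ (j : ℕ) = l then a
  else if (i : ℕ) = l ∧ (j : ℕ) = l + 1 then b
  else if (i : ℕ) = l + 1 ∧ (j : ℕ) = l then c
  else if (i : ℕ) = l + 1 ∧ (j : ℕ) = l + 1 then d
  else if i = j then 1 else 0

/-!
With `w = (T^c_k - 1)_k`, the boundary relation says `w M = w`. As `G'` differs from the identity
only in its last column, `w (M G' - 1)` vanishes except in the last coordinate, where it equals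
`(T^c_{n-1} - 1) + (T^c_n - 1)(-t⁻¹ - 1) = t⁻¹ (1 - T^c_{n-1} t²)` because `T^c_n = t T^c_{n-1}`.
Replacing the last row of `M G' - 1` by this combination of its rows multiplies the determinant
by `w_n = T^c_n - 1` and produces a matrix with last row `(0, …, 0, t⁻¹ (1 - T^c_{n-1} t²))`
and upper-left block `A - 1`.
-/

open Matrix

theorem Matrix.det_mul_last_eq_of_vecMul_castSucc_eq_zero {R : Type*} [CommRing R] {n : ℕ}
    (N : Matrix (Fin (n+1)) (Fin (n+1)) R) (w : Fin (n+1) → R)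
    (hw : ∀ j : Fin n, (w ᵥ* N) j.castSucc = 0) :
    w (Fin.last n) * N.det =
      (w ᵥ* N) (Fin.last n) * (N.submatrix Fin.castSucc Fin.castSucc).det := by
  rw [← smul_eq_mul, ← det_updateRow_sum, ← vecMul_eq_sum, det_succ_row _ (Fin.last n),
    Fin.sum_univ_castSucc, ← Fin.succAbove_last, submatrix_updateRow_succAbove]
  simp [hw]

section Gassner

variable {μ : ℕ}

def boundaryWeights {n : ℕ} (c : Fin n → Fin μ) : Fin n → Lau μ :=
  fun k => (TU c k : Lau μ) - 1

lemma TU_succ {n : ℕ} (c : Fin (n+1) → Fin μ) (i : Fin n) :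
    TU c i.succ = tU (c i.succ) * TU c i.castSucc := by
  have hIic : Finset.Iic i.succ = insert i.succ (Finset.Iic i.castSucc) := by
    ext k
    simp only [Finset.mem_Iic, Finset.mem_insert, Fin.le_def, Fin.ext_iff, Fin.val_succ,
      Fin.val_castSucc]
    omega
  rw [TU, hIic, Finset.prod_insert (by simp [Fin.le_def])]
  rfl

variable {l : ℕ} {c : Fin (l+2) → Fin μ} {A : Matrix (Fin (l+1)) (Fin (l+1)) (Lau μ)}
  {v : Fin (l+1) → Lau μ}

@[simp]
lemma aug_castSucc_castSucc (i j : Fin (l+1)) : aug A v i.castSucc j.castSucc = A i j := by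
  simp [aug, Fin.is_le]

@[simp]
lemma aug_castSucc_last (i : Fin (l+1)) : aug A v i.castSucc (Fin.last (l+1)) = 0 := by
  simp [aug, Fin.is_le]

@[simp]
lemma aug_last_castSucc (j : Fin (l+1)) : aug A v (Fin.last (l+1)) j.castSucc = v j := by
  simp [aug, Fin.is_le]

@[simp]
lemma aug_last_last : aug A v (Fin.last (l+1)) (Fin.last (l+1)) = 1 := by
  simp [aug]

lemma last2Block_one_zero (b d : Lau μ) :
    last2Block l 1 b 0 d = (1 : Matrix (Fin (l+2)) (Fin (l+2)) (Lau μ)).updateCol (Fin.last (l+1))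
      (Pi.single (Fin.last l).castSucc b + Pi.single (Fin.last (l+1)) d) := by
  ext i j
  simp only [last2Block, updateCol_apply, one_apply, Pi.add_apply, Pi.single_apply, Fin.ext_iff,
    Fin.val_last, Fin.val_castSucc]
  split_ifs <;> first | omega | simp

lemma BoundaryRel.vecMul_aug (hb : BoundaryRel c A v) :
    boundaryWeights c ᵥ* aug A v = boundaryWeights c := by
  funext k
  induction k using Fin.lastCases with
  | last => simp [vecMul, dotProduct, Fin.sum_univ_castSucc]
  | cast j =>
    have hj := hb j
    simp only [Matrix.sub_apply, one_apply, mul_sub, mul_ite, mul_one, mul_zero,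
      Finset.sum_sub_distrib, Finset.sum_ite_eq', Finset.mem_univ, if_true] at hj
    rw [vecMul, dotProduct, Fin.sum_univ_castSucc]
    simp only [aug_castSucc_castSucc, aug_last_castSucc, boundaryWeights]
    linear_combination hj

lemma BoundaryRel.vecMul_aug_mul_last2Block_sub_one (hb : BoundaryRel c A v) (b d : Lau μ) :
    boundaryWeights c ᵥ* (aug A v * last2Block l 1 b 0 d - 1) =
      Pi.single (Fin.last (l+1)) (boundaryWeights c (Fin.last l).castSucc * b +
        boundaryWeights c (Fin.last (l+1)) * (d - 1)) := by
  rw [vecMul_sub, ← vecMul_vecMul, hb.vecMul_aug, last2Block_one_zero, vecMul_updateCol,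
    vecMul_one]
  funext k
  induction k using Fin.lastCases <;> simp [dotProduct_add, dotProduct_single, mul_sub]
  ring

lemma submatrix_aug_mul_last2Block_sub_one (b d : Lau μ) :
    (aug A v * last2Block l 1 b 0 d - 1).submatrix Fin.castSucc Fin.castSucc = A - 1 := by
  rw [last2Block_one_zero, mul_updateCol, mul_one]
  ext i j
  simp [one_apply]

end Gassner

/-- the determinant identity for the negative stabilization. With
`t = t_{c_n}`, `M = [[A,0],[v,1]]` and `G'` the identity except for the last `2×2`
diagonal block `[[1,1],[0,−t⁻¹]]`, if `(A,v)` satisfies the boundary relation for `c` then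
`(T^c_n − 1) · det(M·G' − I_n) = t⁻¹ (1 − T^c_{n−1} t²) · det(A − I_{n−1})`
(here `n = l + 2 ≥ 2`). -/
theorem stmt5 {μ l : ℕ} (c : Fin (l+2) → Fin μ)
    (A : Matrix (Fin (l+1)) (Fin (l+1)) (Lau μ)) (v : Fin (l+1) → Lau μ)
    (hb : BoundaryRel c A v) :
    ((TU c (Fin.last (l+1)) : Lau μ) - 1) *
        (aug A v *
            last2Block l 1 1 0 (-(((tU (c (Fin.last (l+1))))⁻¹ : (Lau μ)ˣ) : Lau μ)) - 1).det
      = (((tU (c (Fin.last (l+1))))⁻¹ : (Lau μ)ˣ) : Lau μ) *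
          (1 - (TU c ((Fin.last l).castSucc) : Lau μ) * (tU (c (Fin.last (l+1))) : Lau μ) ^ 2) *
          (A - 1).det := by
  set t := tU (c (Fin.last (l+1)))
  have hrow := hb.vecMul_aug_mul_last2Block_sub_one 1 (-((t⁻¹ : (Lau μ)ˣ) : Lau μ))
  have hdet := det_mul_last_eq_of_vecMul_castSucc_eq_zero
    (aug A v * last2Block l 1 1 0 (-((t⁻¹ : (Lau μ)ˣ) : Lau μ)) - 1) (boundaryWeights c)
    (fun j => by simp [hrow, Fin.castSucc_ne_last])
  rw [hrow, Pi.single_eq_same, submatrix_aug_mul_last2Block_sub_one] at hdet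
  have hT : (TU c (Fin.last (l+1)) : Lau μ) = t * TU c (Fin.last l).castSucc := by
    rw [← Fin.succ_last, TU_succ, Units.val_mul]
    rfl
  simp only [boundaryWeights] at hdet
  rw [hdet, hT]
  linear_combination ((TU c (Fin.last l).castSucc : Lau μ) * (t - 1) * (A - 1).det) * t.mul_inv
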